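/- arXiv:1909.07506 — 2 statements merged into one kernel-verified Lean document; each statement's English description precedes it below -/
import Mathlib

section
/- Suppose Xₙ converges in distribution to X with X, Xₙ > 0 almost surely, and let α > 0. Set ρₙ = 1 − Xₙ/n^α. Then 1/(n^α log|ρₙ|) converges in distribution to −1/X as n → ∞. -/
open MeasureTheory ProbabilityTheory Filter Topology

/-!
For `0 < x ≤ N` and `t < 0` the event `1 / (N log |1 - x / N|) ≤ t` is exactly
`x ≤ N (1 - exp (1 / (t N)))`, and this threshold tends to `-1 / t` as `N → ∞`; for `t ≥ 0`
the event always holds. Take `N = n ^ α → ∞`. Since `Xₙ` converges in distribution it is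
tight, so `Xₙ > n ^ α` has vanishing probability, and `P(Yₙ ≤ t)` is asymptotically `Fₙ(cₙ)`
with `cₙ → -1 / t`. Squeezing the moving argument `cₙ` between nearby continuity points of
the limit `F` (dense, as `F` is monotone) gives `Fₙ(cₙ) → F(-1 / t) = P(-1 / X ≤ t)`.
-/

open Set
open scoped symmDiff

theorem Monotone.exists_continuousAt_mem_Ioo {F : ℝ → ℝ} (hF : Monotone F) {a b : ℝ}
    (hab : a < b) : ∃ x ∈ Ioo a b, ContinuousAt F x := by
  obtain ⟨x, hx, hax, hxb⟩ := (hF.countable_not_continuousAt.dense_compl ℝ).exists_between hab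
  exact ⟨x, ⟨hax, hxb⟩, not_not.1 hx⟩

def TendstoAtContinuityPoints (Fn : ℕ → ℝ → ℝ) (F : ℝ → ℝ) : Prop :=
  ∀ t, ContinuousAt F t → Tendsto (fun n => Fn n t) atTop (𝓝 (F t))

namespace TendstoAtContinuityPoints

variable {Fn : ℕ → ℝ → ℝ} {F : ℝ → ℝ}

theorem tendsto_apply_of_tendsto (h : TendstoAtContinuityPoints Fn F)
    (hFn : ∀ n, Monotone (Fn n)) (hF : Monotone F) {c : ℝ} (hc : ContinuousAt F c)
    {cn : ℕ → ℝ} (hcn : Tendsto cn atTop (𝓝 c)) :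
    Tendsto (fun n => Fn n (cn n)) atTop (𝓝 (F c)) := by
  refine tendsto_order.2 ⟨fun y hy => ?_, fun y hy => ?_⟩
  · obtain ⟨l, hlc, hl⟩ := exists_Ioc_subset_of_mem_nhds (hc.eventually (lt_mem_nhds hy))
      ⟨c - 1, sub_one_lt c⟩
    obtain ⟨a, ha, hFa⟩ := hF.exists_continuousAt_mem_Ioo hlc
    filter_upwards [(h a hFa).eventually (lt_mem_nhds (hl ⟨ha.1, ha.2.le⟩)),
      hcn.eventually (lt_mem_nhds ha.2)] with n hya hacn
    exact hya.trans_le (hFn n hacn.le)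
  · obtain ⟨u, hcu, hu⟩ := exists_Ico_subset_of_mem_nhds (hc.eventually (gt_mem_nhds hy))
      ⟨c + 1, lt_add_one c⟩
    obtain ⟨b, hb, hFb⟩ := hF.exists_continuousAt_mem_Ioo hcu
    filter_upwards [(h b hFb).eventually (gt_mem_nhds (hu ⟨hb.1.le, hb.2⟩)),
      hcn.eventually (gt_mem_nhds hb.1)] with n hby hcnb
    exact (hFn n hcnb.le).trans_lt hby

theorem tendsto_apply_of_tendsto_atTop (h : TendstoAtContinuityPoints Fn F)
    (hFn : ∀ n, Monotone (Fn n)) (hFn_le : ∀ n s, Fn n s ≤ 1) (hF : Monotone F)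
    (hF_lim : Tendsto F atTop (𝓝 1)) {a : ℕ → ℝ} (ha : Tendsto a atTop atTop) :
    Tendsto (fun n => Fn n (a n)) atTop (𝓝 1) := by
  refine tendsto_order.2
    ⟨fun y hy => ?_, fun y hy => .of_forall fun n => (hFn_le n _).trans_lt hy⟩
  obtain ⟨M, hM⟩ := eventually_atTop.1 (hF_lim.eventually (lt_mem_nhds hy))
  obtain ⟨b, hb, hFb⟩ := hF.exists_continuousAt_mem_Ioo (lt_add_one M)
  filter_upwards [(h b hFb).eventually (lt_mem_nhds (hM b hb.1.le)),
    ha.eventually_ge_atTop b] with n hyb hba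
  exact hyb.trans_le (hFn n hba)

end TendstoAtContinuityPoints

section Probability

variable {Ω : Type*} [MeasurableSpace Ω] {μ : Measure Ω}

theorem tendsto_measureReal_of_ae_iff_outside [IsFiniteMeasure μ] {ι : Type*} {l : Filter ι}
    {A B S : ι → Set Ω} {L : ℝ} (hA : ∀ i, NullMeasurableSet (A i) μ)
    (hB : ∀ i, NullMeasurableSet (B i) μ)
    (hAB : ∀ᶠ i in l, ∀ᵐ ω ∂μ, ω ∉ S i → (ω ∈ A i ↔ ω ∈ B i))
    (hB_lim : Tendsto (fun i => μ.real (B i)) l (𝓝 L))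
    (hS : Tendsto (fun i => μ.real (S i)) l (𝓝 0)) :
    Tendsto (fun i => μ.real (A i)) l (𝓝 L) := by
  refine hB_lim.congr_dist (squeeze_zero' (.of_forall fun _ => dist_nonneg) ?_ hS)
  filter_upwards [hAB] with i hi
  have hsub : B i ∆ A i ≤ᵐ[μ] S i := by
    filter_upwards [hi] with ω hω (hmem : ω ∈ B i ∆ A i)
    show ω ∈ S i
    by_contra hωS
    rw [mem_symmDiff] at hmem
    tauto
  exact (abs_measureReal_sub_le_measureReal_symmDiff (hB i) (hA i)).trans
    (ENNReal.toReal_mono (measure_ne_top μ _) (measure_mono_ae hsub))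

theorem monotone_measureReal_le [IsFiniteMeasure μ] (Y : Ω → ℝ) :
    Monotone fun s => μ.real {ω | Y ω ≤ s} :=
  fun _ _ hst => measureReal_mono fun _ hω => le_trans hω hst

theorem tendsto_measureReal_le_atTop [IsProbabilityMeasure μ] (Y : Ω → ℝ) :
    Tendsto (fun s => μ.real {ω | Y ω ≤ s}) atTop (𝓝 1) := by
  have hU : ⋃ s : ℝ, {ω | Y ω ≤ s} = univ :=
    eq_univ_of_forall fun ω => mem_iUnion.2 ⟨Y ω, (le_refl (Y ω) : Y ω ≤ Y ω)⟩
  have hmono : Monotone fun s : ℝ => {ω | Y ω ≤ s} := fun _ _ hst _ hω => le_trans hω hst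
  have h := tendsto_measure_iUnion_atTop (μ := μ) hmono
  rw [hU, measure_univ] at h
  exact (ENNReal.tendsto_toReal ENNReal.one_ne_top).comp h

theorem tendsto_measureReal_lt_of_tendsto_atTop [IsProbabilityMeasure μ] {X : Ω → ℝ}
    {Xn : ℕ → Ω → ℝ} (hXn : ∀ n, Measurable (Xn n))
    (h : TendstoAtContinuityPoints (fun n s => μ.real {ω | Xn n ω ≤ s})
      (fun s => μ.real {ω | X ω ≤ s})) {a : ℕ → ℝ} (ha : Tendsto a atTop atTop) :
    Tendsto (fun n => μ.real {ω | a n < Xn n ω}) atTop (𝓝 0) := by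
  have h1 := h.tendsto_apply_of_tendsto_atTop (fun n => monotone_measureReal_le (Xn n))
    (fun _ _ => measureReal_le_one) (monotone_measureReal_le X)
    (tendsto_measureReal_le_atTop X) ha
  rw [← sub_self 1]
  refine (tendsto_const_nhds.sub h1).congr fun n => ?_
  rw [← probReal_compl_eq_one_sub (measurableSet_le (hXn n) measurable_const)]
  simp only [Set.compl_ofPred, not_le]

variable {Y : Ω → ℝ}

theorem measureReal_neg_one_div_le_of_neg (hY : ∀ᵐ ω ∂μ, 0 < Y ω) {t : ℝ} (ht : t < 0) :
    μ.real {ω | -1 / Y ω ≤ t} = μ.real {ω | Y ω ≤ -1 / t} := by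
  refine measureReal_congr ?_
  filter_upwards [hY] with ω hω
  show (-1 / Y ω ≤ t) = (Y ω ≤ -1 / t)
  rw [div_le_iff₀ hω, le_div_iff_of_neg ht, mul_comm]

theorem measureReal_neg_one_div_le_of_nonneg [IsProbabilityMeasure μ]
    (hY : ∀ᵐ ω ∂μ, 0 < Y ω) {t : ℝ} (ht : 0 ≤ t) : μ.real {ω | -1 / Y ω ≤ t} = 1 := by
  refine (measureReal_congr ?_).trans probReal_univ
  filter_upwards [hY] with ω hω
  exact eq_true ((div_neg_of_neg_of_pos neg_one_lt_zero hω).le.trans ht)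

theorem continuousAt_measureReal_le_of_neg_one_div (hY : ∀ᵐ ω ∂μ, 0 < Y ω) {t : ℝ}
    (ht : t < 0)
    (hG : ContinuousAt (fun s => μ.real {ω | -1 / Y ω ≤ s}) t) :
    ContinuousAt (fun s => μ.real {ω | Y ω ≤ s}) (-1 / t) := by
  have hc : 0 < -1 / t := div_pos_of_neg_of_neg neg_one_lt_zero ht
  have hinv : ContinuousAt (fun u : ℝ => -1 / u) (-1 / t) :=
    continuousAt_const.div continuousAt_id hc.ne'
  refine (hG.comp_of_eq hinv (by field_simp)).congr ?_
  filter_upwards [lt_mem_nhds hc] with u hu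
  rw [Function.comp_apply,
    measureReal_neg_one_div_le_of_neg hY (div_neg_of_neg_of_pos neg_one_lt_zero hu)]
  field_simp

end Probability

theorem tendsto_mul_one_sub_exp_div_atTop (a : ℝ) :
    Tendsto (fun x : ℝ => x * (1 - Real.exp (a / x))) atTop (𝓝 (-a)) := by
  rcases eq_or_ne a 0 with rfl | ha
  · simp
  have hax : Tendsto (fun x => a / x) atTop (𝓝[≠] 0) :=
    tendsto_nhdsWithin_iff.2 ⟨tendsto_const_nhds.div_atTop tendsto_id,
      (eventually_gt_atTop 0).mono fun x hx => div_ne_zero ha hx.ne'⟩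
  have h := ((Real.hasDerivAt_exp 0).tendsto_slope_zero.comp hax).const_mul (-a)
  simp only [Real.exp_zero, mul_one] at h
  refine h.congr fun x => ?_
  simp only [Function.comp_apply, zero_add, smul_eq_mul, inv_div]
  field_simp
  ring

theorem one_div_mul_log_abs_one_sub_div_le_iff {N x t : ℝ} (hx : 0 < x) (hxN : x ≤ N)
    (ht : t < 0) :
    1 / (N * Real.log |1 - x / N|) ≤ t ↔ x ≤ N * (1 - Real.exp (1 / t / N)) := by
  have hN : 0 < N := hx.trans_le hxN
  rcases hxN.lt_or_eq with hxN | rfl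
  · have hu : 0 < 1 - x / N := sub_pos.2 ((div_lt_one hN).2 hxN)
    have hlog : N * Real.log (1 - x / N) < 0 :=
      mul_neg_of_pos_of_neg hN (Real.log_neg hu (by linarith [div_pos hx hN]))
    rw [abs_of_pos hu, one_div_le_of_neg hlog ht, ← div_le_iff₀' hN, Real.le_log_iff_exp_le hu,
      le_sub_comm, div_le_iff₀' hN]
  · -- `log 0 = 0`, so the left side reads `0 ≤ t`.
    rw [div_self hN.ne', sub_self, abs_zero, Real.log_zero, mul_zero, div_zero]
    exact iff_of_false ht.not_ge fun h => by nlinarith [mul_pos hx (Real.exp_pos (1 / t / x))]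

theorem one_div_mul_log_abs_one_sub_div_le {N x t : ℝ} (hx : 0 ≤ x) (hxN : x ≤ N)
    (ht : 0 ≤ t) : 1 / (N * Real.log |1 - x / N|) ≤ t := by
  have hN : 0 ≤ N := hx.trans hxN
  have hq₀ : 0 ≤ x / N := div_nonneg hx hN
  have hq₁ : x / N ≤ 1 := div_le_one_of_le₀ hxN hN
  have habs : |1 - x / N| ≤ 1 := abs_le.2 ⟨by linarith, by linarith⟩
  exact (one_div_nonpos.2 (mul_nonpos_of_nonneg_of_nonpos hN
    (Real.log_nonpos (abs_nonneg _) habs))).trans ht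

theorem reciprocal_log_convergence_general {Ω : Type*} [MeasureSpace Ω]
    [IsProbabilityMeasure (ℙ : Measure Ω)]
    (X : Ω → ℝ) (Xn : ℕ → Ω → ℝ)
    (hXn : ∀ n, Measurable (Xn n))
    (hXpos : ∀ᵐ ω ∂ℙ, 0 < X ω) (hXnpos : ∀ n, ∀ᵐ ω ∂ℙ, 0 < Xn n ω)
    (α : ℝ) (hα : 0 < α)
    (hdist : ∀ t : ℝ, ContinuousAt (fun s => (ℙ {ω | X ω ≤ s}).toReal) t →
      Tendsto (fun n => (ℙ {ω | Xn n ω ≤ t}).toReal) atTop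
        (𝓝 ((ℙ {ω | X ω ≤ t}).toReal))) :
    ∀ t : ℝ, ContinuousAt (fun s => (ℙ {ω | -1 / X ω ≤ s}).toReal) t →
      Tendsto
        (fun m : ℕ => (ℙ {ω |
          1 / ((m : ℝ) ^ α * Real.log |1 - Xn m ω / (m : ℝ) ^ α|) ≤ t}).toReal)
        atTop (𝓝 ((ℙ {ω | -1 / X ω ≤ t}).toReal)) := by
  have hconv : TendstoAtContinuityPoints (fun n s => (ℙ : Measure Ω).real {ω | Xn n ω ≤ s})
      (fun s => (ℙ : Measure Ω).real {ω | X ω ≤ s}) := hdist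
  intro t hG
  have hN : Tendsto (fun m : ℕ => (m : ℝ) ^ α) atTop atTop :=
    (tendsto_rpow_atTop hα).comp tendsto_natCast_atTop_atTop
  have hA : ∀ m : ℕ, NullMeasurableSet
      {ω | 1 / ((m : ℝ) ^ α * Real.log |1 - Xn m ω / (m : ℝ) ^ α|) ≤ t} ℙ :=
    fun m => (measurableSet_le (by fun_prop) measurable_const).nullMeasurableSet
  have hS := tendsto_measureReal_lt_of_tendsto_atTop hXn hconv hN
  rcases lt_or_ge t 0 with ht | ht
  · refine tendsto_measureReal_of_ae_iff_outside hA
      (B := fun m => {ω | Xn m ω ≤ (m : ℝ) ^ α * (1 - Real.exp (1 / t / (m : ℝ) ^ α))})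
      (fun m => (measurableSet_le (hXn m) measurable_const).nullMeasurableSet)
      (.of_forall fun m => (hXnpos m).mono fun ω hpos hle =>
        one_div_mul_log_abs_one_sub_div_le_iff hpos (not_lt.1 hle) ht) ?_ hS
    rw [← measureReal_def, measureReal_neg_one_div_le_of_neg hXpos ht]
    refine hconv.tendsto_apply_of_tendsto (fun n => monotone_measureReal_le (Xn n))
      (monotone_measureReal_le X) (continuousAt_measureReal_le_of_neg_one_div hXpos ht hG) ?_
    rw [neg_div]
    exact (tendsto_mul_one_sub_exp_div_atTop (1 / t)).comp hN
  · refine tendsto_measureReal_of_ae_iff_outside hA (B := fun _ => univ)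
      (fun _ => nullMeasurableSet_univ)
      (.of_forall fun m => (hXnpos m).mono fun ω hpos hle =>
        iff_of_true (one_div_mul_log_abs_one_sub_div_le hpos.le (not_lt.1 hle) ht) trivial) ?_ hS
    rw [← measureReal_def, measureReal_neg_one_div_le_of_nonneg hXpos ht, probReal_univ]
    exact tendsto_const_nhds

/-- If `Xₙ → X` in distribution with `X, Xₙ > 0` a.s. and `α > 0`, and
`ρₙ = 1 - Xₙ/n^α`, then `1/(n^α log |ρₙ|)` converges in distribution to `-1/X`. -/
theorem reciprocal_log_convergence {Ω : Type*} [MeasureSpace Ω]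
    [IsProbabilityMeasure (ℙ : Measure Ω)]
    (X : Ω → ℝ) (Xn : ℕ → Ω → ℝ)
    (hX : Measurable X) (hXn : ∀ n, Measurable (Xn n))
    (hXpos : ∀ᵐ ω ∂ℙ, 0 < X ω) (hXnpos : ∀ n, ∀ᵐ ω ∂ℙ, 0 < Xn n ω)
    (α : ℝ) (hα : 0 < α)
    (hdist : ∀ t : ℝ, ContinuousAt (fun s => (ℙ {ω | X ω ≤ s}).toReal) t →
      Tendsto (fun n => (ℙ {ω | Xn n ω ≤ t}).toReal) atTop
        (𝓝 ((ℙ {ω | X ω ≤ t}).toReal))) :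
    ∀ t : ℝ, ContinuousAt (fun s => (ℙ {ω | -1 / X ω ≤ s}).toReal) t →
      Tendsto
        (fun m : ℕ => (ℙ {ω |
          1 / ((m : ℝ) ^ α * Real.log |1 - Xn m ω / (m : ℝ) ^ α|) ≤ t}).toReal)
        atTop (𝓝 ((ℙ {ω | -1 / X ω ≤ t}).toReal)) :=
  reciprocal_log_convergence_general X Xn hXn hXpos hXnpos α hα hdist
end

section
/- Suppose ξₙ → X in distribution with X > 0 a.s. and continuous CDF, α > 0, and 0 < ε < 1. Define kₙ = (log ε + log(ξₙ/n^α)) / log|1 − ξₙ/n^α| (i.e., kₙ = (−α log(n/ε^{1/α}) + log ξₙ)/log|1 − ξₙ/n^α|). Then kₙ/(α log(n/ε^{1/α}) n^α) converges in distribution to 1/X as n → ∞. -/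
open MeasureTheory ProbabilityTheory Filter Topology

set_option maxHeartbeats 1000000

noncomputable def gfun (α ε : ℝ) (n : ℕ) (x : ℝ) : ℝ :=
  ((-α * Real.log ((n : ℝ) / ε ^ (1 / α)) + Real.log x) /
      Real.log |1 - x / (n : ℝ) ^ α|) /
    (α * Real.log ((n : ℝ) / ε ^ (1 / α)) * (n : ℝ) ^ α)

lemma Lfun_eq (α ε : ℝ) (hα : 0 < α) (hε0 : 0 < ε) (n : ℕ) (hn : 1 ≤ n) :
    α * Real.log ((n : ℝ) / ε ^ (1 / α)) = α * Real.log n - Real.log ε := by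
  have hn0 : (0:ℝ) < n := by exact_mod_cast hn
  rw [Real.log_div (ne_of_gt hn0) (ne_of_gt (Real.rpow_pos_of_pos hε0 _)),
    Real.log_rpow hε0]
  field_simp

lemma Lfun_tendsto (α ε : ℝ) (hα : 0 < α) (hε0 : 0 < ε) :
    Tendsto (fun n : ℕ => α * Real.log ((n : ℝ) / ε ^ (1 / α))) atTop atTop := by
  apply Tendsto.const_mul_atTop hα
  apply Real.tendsto_log_atTop.comp
  exact (tendsto_natCast_atTop_atTop).atTop_div_const (Real.rpow_pos_of_pos hε0 _)

lemma Nfun_tendsto (α : ℝ) (hα : 0 < α) :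
    Tendsto (fun n : ℕ => (n : ℝ) ^ α) atTop atTop :=
  (tendsto_rpow_atTop hα).comp tendsto_natCast_atTop_atTop

lemma log_one_sub_le (u : ℝ) (hu0 : 0 < u) (hu : u ≤ 1/2) :
    Real.log (1 - u) ≤ -u := by
  have h : (0:ℝ) < 1 - u := by linarith
  have := Real.log_le_sub_one_of_pos h
  linarith

lemma log_one_sub_ge (u : ℝ) (hu0 : 0 < u) (hu : u ≤ 1/2) :
    -(u + 2*u^2) ≤ Real.log (1 - u) := by
  have h : (0:ℝ) < 1 - u := by linarith
  have hinv : Real.log (1 - u) = - Real.log (1 - u)⁻¹ := by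
    rw [Real.log_inv]; ring
  have h2 := Real.log_le_sub_one_of_pos (inv_pos.mpr h)
  have h3 : (1 - u)⁻¹ - 1 = u / (1 - u) := by field_simp; ring
  have h4 : u / (1 - u) ≤ u + 2*u^2 := by
    rw [div_le_iff₀ h]; nlinarith
  rw [hinv]
  rw [h3] at h2
  linarith

lemma key_est (L N x M δ₀ : ℝ)
    (hx0 : 0 < x) (hN : 2*x ≤ N)
    (hlogx : |Real.log x| ≤ M - 1)
    (hL : 2*M ≤ L)
    (hML : M / (x*L) ≤ δ₀/2)
    (hNbig : 2/N ≤ δ₀/2) :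
    |((-L + Real.log x) / Real.log |1 - x/N|) / (L*N) - 1/x| ≤ δ₀ := by
  have hN0 : (0:ℝ) < N := by linarith
  set u := x/N with hu
  have hu0 : 0 < u := div_pos hx0 hN0
  have huh : u ≤ 1/2 := by rw [hu, div_le_iff₀ hN0]; linarith
  have huN : u * N = x := div_mul_cancel₀ x (ne_of_gt hN0)
  have habs : |1 - x/N| = 1 - u := abs_of_pos (by rw [← hu]; linarith)
  have hM1 : (1:ℝ) ≤ M := by have := abs_nonneg (Real.log x); linarith
  have hL0 : (0:ℝ) < L := by linarith
  have hlog1 : Real.log x ≤ M - 1 := (abs_le.mp hlogx).2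
  have hlog2 : -(M-1) ≤ Real.log x := (abs_le.mp hlogx).1
  set D := Real.log (1 - u) with hD
  have hD1 : D ≤ -u := log_one_sub_le u hu0 huh
  have hD2 : -(u + 2*u^2) ≤ D := log_one_sub_ge u hu0 huh
  set v := -D with hv
  have hv1 : u ≤ v := by rw [hv]; linarith
  have hv2 : v ≤ u + 2*u^2 := by rw [hv]; linarith
  have hv0 : 0 < v := lt_of_lt_of_le hu0 hv1
  set P := L - Real.log x with hP
  have hP0 : (0:ℝ) < P := by rw [hP]; linarith
  have hD0 : D < 0 := lt_of_le_of_lt hD1 (by linarith)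
  have hEeq : ((-L + Real.log x) / Real.log |1 - x/N|) / (L*N)
      = P / (v*(L*N)) := by
    rw [habs, ← hD, hv, hP]
    have : D ≠ 0 := ne_of_lt hD0
    field_simp
    ring
  rw [hEeq]
  have hdenpos : 0 < u*(L*N) := by positivity
  have hxL : 0 < x*L := by positivity
  -- upper bound
  have hup : P/(v*(L*N)) - 1/x ≤ δ₀/2 := by
    have h1 : P/(v*(L*N)) ≤ P/(u*(L*N)) := by
      apply div_le_div_of_nonneg_left (le_of_lt hP0) hdenpos
      have : 0 ≤ L*N := by positivity
      nlinarith
    have h2 : u*(L*N) = x*L := by rw [← huN]; ring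
    rw [h2] at h1
    have h3 : P/(x*L) - 1/x = (- Real.log x)/(x*L) := by
      rw [hP]; field_simp; ring
    have h4 : (- Real.log x)/(x*L) ≤ M/(x*L) := by
      gcongr
      linarith
    linarith [h4.trans hML]
  -- lower bound
  have hlowdenpos : 0 < (u+2*u^2)*(L*N) := by positivity
  have hlow : 1/x - P/(v*(L*N)) ≤ δ₀ := by
    have h1 : P/((u+2*u^2)*(L*N)) ≤ P/(v*(L*N)) := by
      apply div_le_div_of_nonneg_left (le_of_lt hP0) (by positivity)
      have : 0 ≤ L*N := by positivity
      nlinarith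
    have h2 : (u+2*u^2)*(L*N) = x*(1+2*u)*L := by rw [← huN]; ring
    rw [h2] at h1
    have hx12 : 0 < x*(1+2*u)*L := by positivity
    have h3 : 1/x - P/(x*(1+2*u)*L) = (2*u*L + Real.log x)/(x*(1+2*u)*L) := by
      rw [hP]; field_simp; ring
    set num := 2*u*L + Real.log x with hnum
    have h4 : num/(x*(1+2*u)*L) ≤ (2*u*L + M)/(x*L) := by
      rcases le_or_gt 0 num with hpos | hneg
      · calc num/(x*(1+2*u)*L) ≤ num/(x*L) := by
              apply div_le_div_of_nonneg_left hpos hxL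
              nlinarith
          _ ≤ (2*u*L + M)/(x*L) := by gcongr; rw [hnum]; linarith
      · have : num/(x*(1+2*u)*L) ≤ 0 := le_of_lt (div_neg_of_neg_of_pos hneg hx12)
        have h5 : 0 ≤ (2*u*L + M)/(x*L) := by positivity
        linarith
    have h5 : (2*u*L + M)/(x*L) = 2/N + M/(x*L) := by
      rw [← huN]
      field_simp
    rw [h5] at h4
    linarith
  rw [abs_le]
  constructor <;> linarith

lemma gfun_unif (α ε c C δ₀ : ℝ) (hα : 0 < α) (hε0 : 0 < ε)
    (hc : 0 < c) (hδ : 0 < δ₀) :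
    ∀ᶠ n : ℕ in atTop, ∀ x : ℝ, c ≤ x → x ≤ C → |gfun α ε n x - 1/x| ≤ δ₀ := by
  set M : ℝ := 1 + |Real.log c| + |Real.log C| with hM
  have hM1 : (1:ℝ) ≤ M := by
    have := abs_nonneg (Real.log c); have := abs_nonneg (Real.log C); rw [hM]; linarith
  have hL := Lfun_tendsto α ε hα hε0
  have hN := Nfun_tendsto α hα
  filter_upwards [hL.eventually_ge_atTop (2*M),
    hL.eventually_ge_atTop (2*M/(c*δ₀)),
    hN.eventually_ge_atTop (2*C),
    hN.eventually_ge_atTop (4/δ₀)] with n h1 h2 h3 h4 x hcx hxC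
  have hx0 : 0 < x := lt_of_lt_of_le hc hcx
  set L := α * Real.log ((n : ℝ) / ε ^ (1 / α)) with hLdef
  set N := (n : ℝ) ^ α with hNdef
  have hL0 : 0 < L := by linarith
  have hN0 : 0 < N := by linarith [le_trans (by linarith : (2:ℝ)*x ≤ 2*C) h3]
  have hlogx : |Real.log x| ≤ M - 1 := by
    have l1 : Real.log c ≤ Real.log x := Real.log_le_log hc hcx
    have l2 : Real.log x ≤ Real.log C := Real.log_le_log hx0 hxC
    rw [abs_le, hM]
    constructor
    · linarith [neg_abs_le (Real.log c), abs_nonneg (Real.log C)]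
    · linarith [le_abs_self (Real.log C), abs_nonneg (Real.log c)]
  have hML : M / (x*L) ≤ δ₀/2 := by
    have hcd : 0 < c * δ₀ := by positivity
    rw [div_le_iff₀ hcd] at h2
    have hxc : M / (x*L) ≤ M / (c*L) := by
      gcongr
      all_goals first | exact hcx | linarith | positivity
    have : M / (c*L) ≤ δ₀/2 := by
      rw [div_le_iff₀ (by positivity)]
      nlinarith
    linarith
  have hNbig : 2/N ≤ δ₀/2 := by
    rw [div_le_div_iff₀ hN0 (by norm_num)]
    rw [div_le_iff₀ hδ] at h4
    nlinarith
  have := key_est L N x M δ₀ hx0 (by linarith) hlogx h1 hML hNbig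
  rw [gfun]
  rw [neg_mul] at *
  convert this using 4 <;> ring

lemma gfun_pos (α ε : ℝ) (hα : 0 < α) (hε0 : 0 < ε) (hε1 : ε < 1)
    (n : ℕ) (hn : 1 ≤ n) (x : ℝ) (hx0 : 0 < x) (hxN : x < (n : ℝ) ^ α) :
    0 < gfun α ε n x := by
  have hn1 : (1:ℝ) ≤ (n:ℝ) := by exact_mod_cast hn
  have hn0 : (0:ℝ) < (n:ℝ) := by linarith
  set N := (n : ℝ) ^ α with hNdef
  have hN0 : 0 < N := Real.rpow_pos_of_pos hn0 α
  have hlogN : Real.log N = α * Real.log n := Real.log_rpow hn0 α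
  set L := α * Real.log ((n : ℝ) / ε ^ (1 / α)) with hLdef
  have hLeq : L = α * Real.log n - Real.log ε := Lfun_eq α ε hα hε0 n hn
  have hlogε : Real.log ε < 0 := Real.log_neg hε0 hε1
  have hlogn : 0 ≤ Real.log n := Real.log_nonneg hn1
  have hL0 : 0 < L := by rw [hLeq]; nlinarith
  have hLgt : Real.log x < L := by
    have := Real.log_lt_log hx0 hxN
    rw [hlogN] at this
    rw [hLeq]; linarith
  have hu1 : x / N < 1 := (div_lt_one hN0).mpr hxN
  have hu0 : 0 < x / N := div_pos hx0 hN0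
  have habs : |1 - x / N| = 1 - x / N := abs_of_pos (by linarith)
  have hD : Real.log |1 - x / N| < 0 := by
    rw [habs]; exact Real.log_neg (by linarith) (by linarith)
  have hnum : -α * Real.log ((n : ℝ) / ε ^ (1 / α)) + Real.log x < 0 := by
    rw [neg_mul, ← hLdef]; linarith
  rw [gfun]
  exact div_pos (div_pos_of_neg_of_neg hnum hD) (by positivity)

lemma toReal_prob_compl {Ω : Type*} [MeasureSpace Ω]
    [IsProbabilityMeasure (ℙ : Measure Ω)] {s : Set Ω} (hs : MeasurableSet s) :
    (ℙ sᶜ).toReal = 1 - (ℙ s).toReal := by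
  rw [prob_compl_eq_one_sub hs, ENNReal.toReal_sub_of_le prob_le_one ENNReal.one_ne_top]
  simp

lemma toReal_le_add {Ω : Type*} [MeasureSpace Ω]
    [IsProbabilityMeasure (ℙ : Measure Ω)] {A B C : Set Ω} (h : A ⊆ B ∪ C) :
    (ℙ A).toReal ≤ (ℙ B).toReal + (ℙ C).toReal := by
  have h1 : ℙ A ≤ ℙ B + ℙ C := le_trans (measure_mono h) (measure_union_le B C)
  have := ENNReal.toReal_mono (by finiteness) h1
  rwa [ENNReal.toReal_add (measure_ne_top _ _) (measure_ne_top _ _)] at this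

lemma toReal_mono_ae {Ω : Type*} [MeasureSpace Ω]
    [IsProbabilityMeasure (ℙ : Measure Ω)] {A B : Set Ω}
    (h : ∀ᵐ ω ∂(ℙ : Measure Ω), ω ∈ A → ω ∈ B) :
    (ℙ A).toReal ≤ (ℙ B).toReal :=
  ENNReal.toReal_mono (measure_ne_top _ _) (measure_mono_ae h)

/-- If `ξₙ → X` in distribution with `X > 0` a.s. and continuous CDF, `α > 0` and
`0 < ε < 1`, then with
`kₙ = (-α log(n/ε^{1/α}) + log ξₙ) / log|1 - ξₙ/n^α|`,
the quantity `kₙ / (α log(n/ε^{1/α}) n^α)` converges in distribution to `1/X`. -/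
theorem kn_convergence {Ω : Type*} [MeasureSpace Ω]
    [IsProbabilityMeasure (ℙ : Measure Ω)]
    (X : Ω → ℝ) (ξ : ℕ → Ω → ℝ)
    (hX : Measurable X) (hξ : ∀ n, Measurable (ξ n))
    (hXpos : ∀ᵐ ω ∂ℙ, 0 < X ω) (hξpos : ∀ n, ∀ ω, 0 < ξ n ω)
    (hcdf : Continuous (fun t => (ℙ {ω | X ω ≤ t}).toReal))
    (α : ℝ) (hα : 0 < α) (ε : ℝ) (hε0 : 0 < ε) (hε1 : ε < 1)
    (hdist : ∀ t : ℝ,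
      Tendsto (fun n => (ℙ {ω | ξ n ω ≤ t}).toReal) atTop
        (𝓝 ((ℙ {ω | X ω ≤ t}).toReal))) :
    ∀ t : ℝ, ContinuousAt (fun s => (ℙ {ω | 1 / X ω ≤ s}).toReal) t →
      Tendsto
        (fun m : ℕ => (ℙ {ω |
          ((-α * Real.log ((m : ℝ) / ε ^ (1 / α)) + Real.log (ξ m ω)) /
              Real.log |1 - ξ m ω / (m : ℝ) ^ α|) /
            (α * Real.log ((m : ℝ) / ε ^ (1 / α)) * (m : ℝ) ^ α) ≤ t}).toReal)
        atTop (𝓝 ((ℙ {ω | 1 / X ω ≤ t}).toReal)) := by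
  intro t hcont
  -- abbreviations
  set G : ℝ → ℝ := fun u => (ℙ {ω | X ω ≤ u}).toReal with hGdef
  set F : ℝ → ℝ := fun s => (ℙ {ω | 1 / X ω ≤ s}).toReal with hFdef
  set P : ℕ → ℝ := fun m => (ℙ {ω | gfun α ε m (ξ m ω) ≤ t}).toReal with hPdef
  show Tendsto P atTop (𝓝 (F t))
  -- F s = 0 for s ≤ 0
  have hF0 : ∀ s : ℝ, s ≤ 0 → F s = 0 := by
    intro s hs
    have : ℙ {ω | 1 / X ω ≤ s} = 0 := by
      rw [measure_eq_zero_iff_ae_notMem]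
      filter_upwards [hXpos] with ω hω
      simp only [Set.mem_setOf_eq, not_le]
      calc s ≤ 0 := hs
        _ < 1 / X ω := by positivity
    simp only [hFdef, this, ENNReal.toReal_zero]
  -- G 0 = 0
  have hG0 : G 0 = 0 := by
    have : ℙ {ω | X ω ≤ (0:ℝ)} = 0 := by
      rw [measure_eq_zero_iff_ae_notMem]
      filter_upwards [hXpos] with ω hω
      simp only [Set.mem_setOf_eq, not_le]
      exact hω
    simp only [hGdef, this, ENNReal.toReal_zero]
  -- G (k) → 1
  have hGtop : Tendsto (fun k : ℕ => G (k:ℝ)) atTop (𝓝 1) := by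
    have hmono : Monotone (fun k : ℕ => {ω | X ω ≤ (k:ℝ)}) := by
      intro i j hij ω hω
      simp only [Set.mem_setOf_eq] at *
      exact le_trans hω (by exact_mod_cast hij)
    have h1 := tendsto_measure_iUnion_atTop (μ := (ℙ : Measure Ω)) hmono
    have huniv : (⋃ k : ℕ, {ω | X ω ≤ (k:ℝ)}) = Set.univ := by
      ext ω
      simp only [Set.mem_iUnion, Set.mem_setOf_eq, Set.mem_univ, iff_true]
      obtain ⟨k, hk⟩ := exists_nat_ge (X ω)
      exact ⟨k, hk⟩
    rw [huniv, measure_univ] at h1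
    have h2 := (ENNReal.tendsto_toReal ENNReal.one_ne_top).comp h1
    exact h2
  -- measurability of CDF-type sets
  have hmeas : ∀ (n : ℕ) (u : ℝ), MeasurableSet {ω | ξ n ω ≤ u} :=
    fun n u => measurableSet_le (hξ n) measurable_const
  rw [Metric.tendsto_atTop]
  intro ε' hε'
  have Hmain : ∀ᶠ m : ℕ in atTop, dist (P m) (F t) < ε' := by
    by_cases ht : 0 < t
    case neg =>
      -- t ≤ 0 : P m → 0 = F t
      have ht' : t ≤ 0 := le_of_not_gt ht
      obtain ⟨k, hk1, hkG⟩ :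
          ∃ k : ℕ, 1 ≤ k ∧ 1 - ε'/4 ≤ G (k:ℝ) := by
        have := (hGtop.eventually (eventually_ge_nhds
          (by linarith : 1 - ε'/4 < 1))).and (eventually_ge_atTop 1)
        obtain ⟨k, hkG, hk1⟩ := this.exists
        exact ⟨k, hk1, hkG⟩
      have hNtend := Nfun_tendsto α hα
      filter_upwards [hNtend.eventually_gt_atTop (k:ℝ),
        eventually_ge_atTop 1,
        (hdist (k:ℝ)).eventually (eventually_ge_nhds
          (by linarith : G (k:ℝ) - ε'/4 < G (k:ℝ)))] with n hNk hn1 hGn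
      have hsub : {ω | gfun α ε n (ξ n ω) ≤ t} ⊆ {ω | ξ n ω ≤ (k:ℝ)}ᶜ := by
        intro ω hω
        simp only [Set.mem_setOf_eq] at hω
        simp only [Set.mem_compl_iff, Set.mem_setOf_eq, not_le]
        by_contra hle
        push_neg at hle
        have hlt : ξ n ω < (n:ℝ) ^ α := lt_of_le_of_lt hle hNk
        have := gfun_pos α ε hα hε0 hε1 n hn1 (ξ n ω) (hξpos n ω) hlt
        linarith
      have hb : P n ≤ 1 - G (k:ℝ) + ε'/4 := by
        have h1 : P n ≤ (ℙ ({ω | ξ n ω ≤ (k:ℝ)}ᶜ)).toReal :=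
          ENNReal.toReal_mono (measure_ne_top _ _) (measure_mono hsub)
        rw [toReal_prob_compl (hmeas n (k:ℝ))] at h1
        linarith
      have hP0 : 0 ≤ P n := ENNReal.toReal_nonneg
      rw [hF0 t ht', Real.dist_eq, abs_lt]
      constructor <;> [linarith; linarith]
    case pos =>
      -- t > 0
      obtain ⟨δ, hδ0, hδ⟩ : ∃ δ > 0, ∀ s : ℝ, dist s t < δ →
          dist (F s) (F t) < ε'/8 :=
        Metric.continuousAt_iff.mp hcont (ε'/8) (by linarith)
      set δ₀ : ℝ := min (δ/4) (t/4) with hδ₀def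
      have hδ₀pos : 0 < δ₀ := by
        apply lt_min <;> linarith
      have hδ₀δ : 2*δ₀ < δ := by
        have := min_le_left (δ/4) (t/4); simp only [← hδ₀def] at this; linarith
      have hδ₀t : 2*δ₀ ≤ t/2 := by
        have := min_le_right (δ/4) (t/4); simp only [← hδ₀def] at this; linarith
      -- choice of c
      obtain ⟨c, hc0, hc1t, hcG⟩ : ∃ c : ℝ, 0 < c ∧ 2*c ≤ 1/t ∧ G c ≤ ε'/8 := by
        have hcont0 : Tendsto G (𝓝 0) (𝓝 0) := by
          have := hcdf.tendsto 0
          rwa [hG0] at this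
        have := hcont0.eventually (eventually_le_nhds (by linarith : (0:ℝ) < ε'/8))
        rw [Metric.eventually_nhds_iff] at this
        obtain ⟨θ, hθ0, hθ⟩ := this
        refine ⟨min (θ/2) (1/(2*t)), by positivity, ?_, ?_⟩
        · have h := min_le_right (θ/2) (1/(2*t))
          have h2 : 2*(1/(2*t)) = 1/t := by field_simp
          linarith
        · apply hθ
          rw [Real.dist_eq, sub_zero, abs_of_pos (by positivity)]
          have := min_le_left (θ/2) (1/(2*t))
          linarith
      -- choice of C
      obtain ⟨k, hk1, hCG⟩ : ∃ k : ℕ, 1 ≤ k ∧ 1 - G (k:ℝ) ≤ ε'/8 := by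
        have := (hGtop.eventually (eventually_ge_nhds
          (by linarith : 1 - ε'/8 < 1))).and (eventually_ge_atTop 1)
        obtain ⟨k, hkG, hk1⟩ := this.exists
        exact ⟨k, hk1, by linarith⟩
      set C : ℝ := (k:ℝ) with hCdef
      have hC1 : (1:ℝ) ≤ C := by rw [hCdef]; exact_mod_cast hk1
      -- key points
      have ht2δ : 0 < t - 2*δ₀ := by linarith
      have htδ : 0 < t - δ₀ := by linarith
      set a : ℝ := 1/(t - δ₀) with hadef
      set r : ℝ := 1/(t + 2*δ₀) with hrdef
      have ha0 : 0 < a := by positivity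
      have hr0 : 0 < r := by positivity
      -- relations with F
      have hFr : 1 - G r ≤ F t + ε'/8 := by
        have h1 : (ℙ ({ω | X ω ≤ r}ᶜ)).toReal ≤ F (t + 2*δ₀) := by
          apply toReal_mono_ae
          filter_upwards [hXpos] with ω hω hmem
          have hrX : r < X ω := by
            have h' : ¬ X ω ≤ r := hmem
            push_neg at h'; exact h'
          show 1 / X ω ≤ t + 2*δ₀
          have : 1 / X ω < 1 / r := one_div_lt_one_div_of_lt hr0 hrX
          rw [hrdef, one_div_one_div] at this
          linarith
        rw [toReal_prob_compl (measurableSet_le hX measurable_const)] at h1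
        have h2 : F (t + 2*δ₀) ≤ F t + ε'/8 := by
          have := hδ (t + 2*δ₀) (by rw [Real.dist_eq]; rw [abs_of_pos] <;> linarith)
          rw [Real.dist_eq, abs_lt] at this
          linarith
        linarith
      have hFa : F t - ε'/8 ≤ 1 - G a := by
        have h1 : F (t - 2*δ₀) ≤ (ℙ ({ω | X ω ≤ a}ᶜ)).toReal := by
          apply toReal_mono_ae
          filter_upwards [hXpos] with ω hω hmem
          have hmem' : 1 / X ω ≤ t - 2*δ₀ := hmem
          simp only [Set.mem_compl_iff, Set.mem_setOf_eq, not_le]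
          have hXlb : 1/(t - 2*δ₀) ≤ X ω := by
            rw [div_le_iff₀ ht2δ]
            rw [div_le_iff₀ hω] at hmem'
            nlinarith
          have : a < 1/(t - 2*δ₀) := by
            rw [hadef]
            apply one_div_lt_one_div_of_lt ht2δ
            linarith
          linarith
        rw [toReal_prob_compl (measurableSet_le hX measurable_const)] at h1
        have h2 : F t - ε'/8 ≤ F (t - 2*δ₀) := by
          have := hδ (t - 2*δ₀) (by
            rw [Real.dist_eq, abs_of_neg] <;> linarith)
          rw [Real.dist_eq, abs_lt] at this
          linarith
        linarith
      -- eventual bounds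
      filter_upwards [gfun_unif α ε c C δ₀ hα hε0 hc0 hδ₀pos,
        (hdist c).eventually (eventually_le_nhds
          (by linarith : G c < G c + ε'/8)),
        (hdist C).eventually (eventually_ge_nhds
          (by linarith : G C - ε'/8 < G C)),
        (hdist r).eventually (eventually_ge_nhds
          (by linarith : G r - ε'/8 < G r)),
        (hdist a).eventually (eventually_le_nhds
          (by linarith : G a < G a + ε'/8))] with n hunif hGc hGC hGr hGa
      -- upper bound on P n
      have hub : P n ≤ F t + 3*ε'/4 := by
        have hsub : {ω | gfun α ε n (ξ n ω) ≤ t} ⊆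
            {ω | ξ n ω ≤ c} ∪ ({ω | ξ n ω ≤ C}ᶜ ∪ {ω | ξ n ω ≤ r}ᶜ) := by
          intro ω hω
          simp only [Set.mem_setOf_eq] at hω
          set x := ξ n ω with hxdef
          have hx0 : 0 < x := hξpos n ω
          by_cases h1 : x ≤ c
          · exact Set.mem_union_left _ h1
          by_cases h2 : x ≤ C
          swap
          · exact Set.mem_union_right _ (Set.mem_union_left _ h2)
          push_neg at h1
          have hu := hunif x (le_of_lt h1) h2
          rw [abs_le] at hu
          have hinv : 1/x ≤ t + δ₀ := by linarith [hu.1]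
          have hxge : 1/(t + δ₀) ≤ x := by
            rw [div_le_iff₀ (by linarith : 0 < t + δ₀)]
            rw [div_le_iff₀ hx0] at hinv
            nlinarith
          have hrx : r < x := by
            have : r < 1/(t + δ₀) := by
              rw [hrdef]
              apply one_div_lt_one_div_of_lt (by linarith) (by linarith)
            linarith
          exact Set.mem_union_right _ (Set.mem_union_right _ (by
            simp only [Set.mem_compl_iff, Set.mem_setOf_eq, not_le]; exact hrx))
        have hm1 := toReal_le_add (h := hsub)
        have hm2 := toReal_le_add (le_refl ({ω | ξ n ω ≤ C}ᶜ ∪ {ω | ξ n ω ≤ r}ᶜ))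
        rw [toReal_prob_compl (hmeas n C), toReal_prob_compl (hmeas n r)] at hm2
        have : P n ≤ (ℙ {ω | ξ n ω ≤ c}).toReal + ((1 - (ℙ {ω | ξ n ω ≤ C}).toReal)
            + (1 - (ℙ {ω | ξ n ω ≤ r}).toReal)) := by
          calc P n ≤ _ := hm1
            _ ≤ _ := by linarith
        have e1 : (ℙ {ω | ξ n ω ≤ c}).toReal ≤ ε'/4 := by
          calc (ℙ {ω | ξ n ω ≤ c}).toReal ≤ G c + ε'/8 := hGc
            _ ≤ ε'/4 := by linarith
        have e2 : 1 - (ℙ {ω | ξ n ω ≤ C}).toReal ≤ ε'/4 := by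
          have : G C - ε'/8 ≤ (ℙ {ω | ξ n ω ≤ C}).toReal := hGC
          linarith
        have e3 : 1 - (ℙ {ω | ξ n ω ≤ r}).toReal ≤ F t + ε'/4 := by
          have : G r - ε'/8 ≤ (ℙ {ω | ξ n ω ≤ r}).toReal := hGr
          linarith
        linarith
      -- lower bound on P n
      have hlb : F t - ε'/2 ≤ P n := by
        have hsub : {ω | ξ n ω ≤ a}ᶜ ⊆
            {ω | gfun α ε n (ξ n ω) ≤ t} ∪ {ω | ξ n ω ≤ C}ᶜ := by
          intro ω hω
          simp only [Set.mem_compl_iff, Set.mem_setOf_eq, not_le] at hω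
          set x := ξ n ω with hxdef
          have hx0 : 0 < x := hξpos n ω
          by_cases h2 : x ≤ C
          swap
          · exact Set.mem_union_right _ (by
              simp only [Set.mem_compl_iff, Set.mem_setOf_eq, not_le]
              push_neg at h2; exact h2)
          have hca : c < a := by
            have h1t : 1/t < a := by
              rw [hadef]
              apply one_div_lt_one_div_of_lt htδ
              linarith
            linarith [hc1t, (by linarith : c ≤ 2*c)]
          have hcx : c ≤ x := le_of_lt (lt_trans hca hω)
          have hu := hunif x hcx h2
          rw [abs_le] at hu
          have hinvx : 1/x < t - δ₀ := by
            have : 1/x < 1/a := one_div_lt_one_div_of_lt ha0 hω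
            rw [hadef, one_div_one_div] at this
            exact this
          have : gfun α ε n x ≤ t := by linarith [hu.2]
          exact Set.mem_union_left _ this
        have hm1 := toReal_le_add (h := hsub)
        rw [toReal_prob_compl (hmeas n a), toReal_prob_compl (hmeas n C)] at hm1
        -- 1 - Gn a ≤ P n + 1 - Gn C
        have e1 : (ℙ {ω | ξ n ω ≤ a}).toReal ≤ G a + ε'/8 := hGa
        have e2 : G C - ε'/8 ≤ (ℙ {ω | ξ n ω ≤ C}).toReal := hGC
        have e3 : G a ≤ 1 - F t + ε'/8 := by linarith
        have e4 : 1 - ε'/8 ≤ G C := by linarith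
        linarith
      rw [Real.dist_eq, abs_lt]
      constructor <;> linarith
  obtain ⟨N, hN⟩ := eventually_atTop.mp Hmain
  exact ⟨N, hN⟩
end
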